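/- arXiv:1809.09521 — 8 statements merged into one kernel-verified Lean document; each statement's English description precedes it below -/
import Mathlib

section
/- For any real q ≥ 1, any nonnegative real numbers x, y, and any ε with 0 ≤ ε ≤ 1, one has (x + ε·y)^q ≤ x^q + 2^q · ε · max{x^q, y^q}. -/
theorem stmt_2 (q x y ε : ℝ) (hq : 1 ≤ q) (hx : 0 ≤ x) (hy : 0 ≤ y)
    (hε0 : 0 ≤ ε) (hε1 : ε ≤ 1) :
    (x + ε * y) ^ q ≤ x ^ q + (2:ℝ) ^ q * ε * max (x ^ q) (y ^ q) := by
  have hxy : (0:ℝ) ≤ x + y := by linarith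
  have hc := (convexOn_rpow hq).2 (Set.mem_Ici.2 hx) (Set.mem_Ici.2 hxy)
    (by linarith : (0:ℝ) ≤ 1 - ε) hε0 (by ring)
  simp only [smul_eq_mul] at hc
  have heq : (1 - ε) * x + ε * (x + y) = x + ε * y := by ring
  rw [heq] at hc
  have hmax : (max x y) ^ q = max (x ^ q) (y ^ q) := by
    rcases le_total x y with h | h
    · rw [max_eq_right h, max_eq_right (Real.rpow_le_rpow hx h (by linarith))]
    · rw [max_eq_left h, max_eq_left (Real.rpow_le_rpow hy h (by linarith))]
  have h2 : (x + y) ^ q ≤ 2 ^ q * max (x ^ q) (y ^ q) := by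
    have hM : x + y ≤ 2 * max x y := by
      rcases le_total x y with h | h
      · rw [max_eq_right h]; linarith
      · rw [max_eq_left h]; linarith
    calc (x + y) ^ q ≤ (2 * max x y) ^ q :=
          Real.rpow_le_rpow hxy hM (by linarith)
      _ = 2 ^ q * (max x y) ^ q := Real.mul_rpow (by norm_num) (le_max_of_le_left hx)
      _ = 2 ^ q * max (x ^ q) (y ^ q) := by rw [hmax]
  have hxq : (0:ℝ) ≤ x ^ q := Real.rpow_nonneg hx q
  calc (x + ε * y) ^ q ≤ (1 - ε) * x ^ q + ε * (x + y) ^ q := hc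
    _ ≤ x ^ q + ε * (2 ^ q * max (x ^ q) (y ^ q)) := by nlinarith
    _ = x ^ q + 2 ^ q * ε * max (x ^ q) (y ^ q) := by ring
end

section
/- For any real q ≥ 1 and any finite subset T of a metric space with |T| = k ≥ 2, the remote-clique value satisfies cl_q(T) ≤ 2^(q-1) · k · st_q(T). -/
open scoped NNReal

lemma key_rpow_ineq {a b : ℝ} (ha : 0 ≤ a) (hb : 0 ≤ b) {q : ℝ} (hq : 1 ≤ q) :
    (a + b) ^ q ≤ (2 : ℝ) ^ (q - 1) * (a ^ q + b ^ q) := by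
  lift a to ℝ≥0 using ha
  lift b to ℝ≥0 using hb
  have h := NNReal.rpow_add_le_mul_rpow_add_rpow a b hq
  exact_mod_cast h

theorem stmt_4 {X : Type*} [MetricSpace X] [DecidableEq X] (q : ℝ) (hq : 1 ≤ q)
    (T : Finset X) (k : ℕ) (hk : T.card = k) (hk2 : 2 ≤ k) (hne : T.Nonempty) :
    (1 / 2 : ℝ) * ∑ u ∈ T, ∑ v ∈ T, dist u v ^ q
      ≤ (2:ℝ) ^ (q - 1) * k * T.inf' hne (fun z => ∑ u ∈ T.erase z, dist z u ^ q) := by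
  obtain ⟨z, hz, hzeq⟩ := T.exists_mem_eq_inf' hne (fun z => ∑ u ∈ T.erase z, dist z u ^ q)
  rw [hzeq]
  set S : ℝ := ∑ u ∈ T, dist z u ^ q with hS
  have herase : ∑ u ∈ T.erase z, dist z u ^ q = S := by
    apply Finset.sum_erase
    simp [Real.zero_rpow (by linarith : q ≠ 0)]
  rw [herase]
  have hq0 : 0 ≤ q := le_trans zero_le_one hq
  have hb : ∑ u ∈ T, ∑ v ∈ T, dist u v ^ q
      ≤ ∑ u ∈ T, ∑ v ∈ T, (2:ℝ) ^ (q - 1) * (dist z u ^ q + dist z v ^ q) := by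
    refine Finset.sum_le_sum fun u hu => Finset.sum_le_sum fun v hv => ?_
    have h2 : dist u v ^ q ≤ (dist u z + dist z v) ^ q :=
      Real.rpow_le_rpow dist_nonneg (dist_triangle u z v) hq0
    refine h2.trans ?_
    rw [dist_comm u z]
    exact key_rpow_ineq dist_nonneg dist_nonneg hq
  have hcalc : ∑ u ∈ T, ∑ v ∈ T, (2:ℝ) ^ (q - 1) * (dist z u ^ q + dist z v ^ q)
      = (2:ℝ) ^ (q - 1) * (2 * k * S) := by
    simp only [← Finset.mul_sum]
    congr 1
    simp only [Finset.sum_add_distrib, Finset.sum_const, nsmul_eq_mul, hk, ← hS]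
    rw [← Finset.mul_sum, ← hS]
    push_cast
    ring
  rw [hcalc] at hb
  nlinarith [hb]
end

section
/- For any real q ≥ 1 and any finite subset T of a metric space with |T| = k even, k ≥ 2, one has cl_q(T) ≤ (2^q + 1) · bp_q(T). -/
/-!
Split `T` along an optimal bisection `L ∪ R`. The cross pairs contribute twice the cut. For the
pairs inside `L`, average the relaxed triangle inequality
`d(u, v)^q ≤ 2^(q-1) (d(u, r)^q + d(v, r)^q)` over the `|R| = |L|` points `r ∈ R`: this bounds the
sum over `L × L` by `2^q` times the cut, and symmetrically for `R × R`.
-/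

open Finset

theorem Real.rpow_add_le_mul_rpow_add_rpow {a b : ℝ} (ha : 0 ≤ a) (hb : 0 ≤ b) {p : ℝ}
    (hp : 1 ≤ p) : (a + b) ^ p ≤ 2 ^ (p - 1) * (a ^ p + b ^ p) := by
  lift a to NNReal using ha
  lift b to NNReal using hb
  exact_mod_cast NNReal.rpow_add_le_mul_rpow_add_rpow a b hp

section

variable {X : Type*} [PseudoMetricSpace X] {p : ℝ}

lemma dist_rpow_le_mul_dist_rpow_add_dist_rpow (hp : 1 ≤ p) (x y z : X) :
    dist x y ^ p ≤ 2 ^ (p - 1) * (dist x z ^ p + dist y z ^ p) :=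
  (Real.rpow_le_rpow dist_nonneg (dist_triangle_right x y z) (by linarith)).trans
    (Real.rpow_add_le_mul_rpow_add_rpow dist_nonneg dist_nonneg hp)

lemma card_mul_sum_sum_dist_rpow_le (hp : 1 ≤ p) (A B : Finset X) :
    #B * ∑ u ∈ A, ∑ v ∈ A, dist u v ^ p ≤ 2 ^ p * #A * ∑ a ∈ A, ∑ b ∈ B, dist a b ^ p := by
  have h2p : (2 : ℝ) ^ p = 2 ^ (p - 1) * 2 := by
    rw [← Real.rpow_add_one two_ne_zero, sub_add_cancel]
  calc #B * ∑ u ∈ A, ∑ v ∈ A, dist u v ^ p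
      = ∑ u ∈ A, ∑ v ∈ A, ∑ _r ∈ B, dist u v ^ p := by
        simp only [sum_const, nsmul_eq_mul, mul_sum]
    _ ≤ ∑ u ∈ A, ∑ v ∈ A, ∑ r ∈ B, 2 ^ (p - 1) * (dist u r ^ p + dist v r ^ p) := by
        gcongr with u _ v _ r _
        exact dist_rpow_le_mul_dist_rpow_add_dist_rpow hp u v r
    _ = 2 ^ p * #A * ∑ a ∈ A, ∑ b ∈ B, dist a b ^ p := by
        simp only [← mul_sum, sum_add_distrib, sum_const, nsmul_eq_mul]
        rw [h2p]
        ring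

lemma sum_sum_dist_rpow_le_of_card_le (hp : 1 ≤ p) {A B : Finset X} (hAB : #A ≤ #B) :
    ∑ u ∈ A, ∑ v ∈ A, dist u v ^ p ≤ 2 ^ p * ∑ a ∈ A, ∑ b ∈ B, dist a b ^ p := by
  rcases B.eq_empty_or_nonempty with rfl | hB
  · simp [card_eq_zero.1 (Nat.le_zero.1 hAB)]
  have hcut : 0 ≤ 2 ^ p * ∑ a ∈ A, ∑ b ∈ B, dist a b ^ p := by positivity
  refine le_of_mul_le_mul_left ?_ (Nat.cast_pos.2 hB.card_pos : (0 : ℝ) < #B)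
  calc #B * ∑ u ∈ A, ∑ v ∈ A, dist u v ^ p
      ≤ 2 ^ p * #A * ∑ a ∈ A, ∑ b ∈ B, dist a b ^ p := card_mul_sum_sum_dist_rpow_le hp A B
    _ ≤ #B * (2 ^ p * ∑ a ∈ A, ∑ b ∈ B, dist a b ^ p) := by
        rw [mul_comm _ (#A : ℝ), mul_assoc]
        exact mul_le_mul_of_nonneg_right (by exact_mod_cast hAB) hcut

lemma sum_sum_dist_rpow_le_bisection [DecidableEq X] (hp : 1 ≤ p) {L T : Finset X}
    (hLT : L ⊆ T) (hcard : #L = #(T \ L)) :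
    ∑ u ∈ T, ∑ v ∈ T, dist u v ^ p
      ≤ 2 * (2 ^ p + 1) * ∑ l ∈ L, ∑ r ∈ T \ L, dist l r ^ p := by
  set R := T \ L
  have hsplit : ∀ f : X → ℝ, ∑ u ∈ T, f u = ∑ u ∈ L, f u + ∑ u ∈ R, f u := fun f => by
    rw [add_comm, sum_sdiff hLT]
  have hRL : ∑ r ∈ R, ∑ l ∈ L, dist r l ^ p = ∑ l ∈ L, ∑ r ∈ R, dist l r ^ p := by
    rw [sum_comm]
    simp only [dist_comm]
  have hLL := sum_sum_dist_rpow_le_of_card_le hp (A := L) (B := R) hcard.le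
  have hRR := sum_sum_dist_rpow_le_of_card_le hp (A := R) (B := L) hcard.ge
  rw [hRL] at hRR
  simp only [hsplit, sum_add_distrib] at *
  linarith

end

theorem stmt_6_general {X : Type*} [MetricSpace X] [DecidableEq X] (q : ℝ) (hq : 1 ≤ q)
    (T : Finset X) (k : ℕ) (hk : T.card = k) (hkeven : Even k)
    (hne : (T.powersetCard (k / 2)).Nonempty) :
    (1 / 2 : ℝ) * ∑ u ∈ T, ∑ v ∈ T, dist u v ^ q
      ≤ ((2:ℝ) ^ q + 1) *
        (T.powersetCard (k / 2)).inf'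
          hne (fun L => ∑ l ∈ L, ∑ r ∈ T \ L, dist l r ^ q) := by
  obtain ⟨L, hL, hmin⟩ := exists_mem_eq_inf' hne fun L => ∑ l ∈ L, ∑ r ∈ T \ L, dist l r ^ q
  obtain ⟨hLT, hLcard⟩ := mem_powersetCard.1 hL
  have hcard : #L = #(T \ L) := by
    obtain ⟨m, rfl⟩ := hkeven
    rw [card_sdiff_of_subset hLT, hk, hLcard]
    omega
  rw [hmin]
  linarith [sum_sum_dist_rpow_le_bisection hq hLT hcard]

theorem stmt_6 {X : Type*} [MetricSpace X] [DecidableEq X] (q : ℝ) (hq : 1 ≤ q)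
    (T : Finset X) (k : ℕ) (hk : T.card = k) (hk2 : 2 ≤ k) (hkeven : Even k)
    (hne : (T.powersetCard (k / 2)).Nonempty) :
    (1 / 2 : ℝ) * ∑ u ∈ T, ∑ v ∈ T, dist u v ^ q
      ≤ ((2:ℝ) ^ q + 1) *
        (T.powersetCard (k / 2)).inf'
          hne (fun L => ∑ l ∈ L, ∑ r ∈ T \ L, dist l r ^ q) :=
  stmt_6_general q hq T k hk hkeven hne
end

section
/- Let q ≥ 1, let T be a finite subset of even cardinality k of a metric space, and let T = L ∪ R be a balanced bipartition (|L| = |R| = k/2) achieving the minimum bp_q(T) = Σ_{ℓ∈L, r∈R} d(ℓ,r)^q. Then cl_q(L) ≤ 2^(q-1) · bp_q(T), where cl_q(L) is the sum of d(ℓ,ℓ')^q over unordered pairs in L. -/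
lemma two_rpow_aux {q : ℝ} (hq : 1 ≤ q) {a b : ℝ} (ha : 0 ≤ a) (hb : 0 ≤ b) :
    (a + b) ^ q ≤ (2 : ℝ) ^ (q - 1) * (a ^ q + b ^ q) := by
  lift a to NNReal using ha
  lift b to NNReal using hb
  have h := NNReal.rpow_add_le_mul_rpow_add_rpow a b hq
  exact_mod_cast h

lemma key_aux {X : Type*} [MetricSpace X] {q : ℝ} (hq : 1 ≤ q) (u v r : X) :
    dist u v ^ q ≤ (2 : ℝ) ^ (q - 1) * (dist u r ^ q + dist v r ^ q) := by
  calc dist u v ^ q ≤ (dist u r + dist v r) ^ q := by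
        apply Real.rpow_le_rpow dist_nonneg _ (by linarith)
        rw [dist_comm v r]; exact dist_triangle u r v
    _ ≤ _ := two_rpow_aux hq dist_nonneg dist_nonneg

theorem stmt_7 {X : Type*} [MetricSpace X] [DecidableEq X] (q : ℝ) (hq : 1 ≤ q)
    (T L R : Finset X) (k : ℕ) (hk : T.card = k) (hk2 : 2 ≤ k) (hkeven : Even k)
    (hdisj : Disjoint L R) (hunion : L ∪ R = T)
    (hL : L.card = k / 2) (hR : R.card = k / 2)
    (hmin : ∀ L' ⊆ T, L'.card = k / 2 →
      (∑ l ∈ L, ∑ r ∈ R, dist l r ^ q) ≤ ∑ l ∈ L', ∑ r ∈ T \ L', dist l r ^ q) :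
    (1 / 2 : ℝ) * ∑ u ∈ L, ∑ v ∈ L, dist u v ^ q
      ≤ (2:ℝ) ^ (q - 1) * ∑ l ∈ L, ∑ r ∈ R, dist l r ^ q := by
  set S : ℝ := ∑ l ∈ L, ∑ r ∈ R, dist l r ^ q with hS
  set A : ℝ := ∑ u ∈ L, ∑ v ∈ L, dist u v ^ q with hA
  have hm : 0 < R.card := by rw [hR]; omega
  have hmR : (R.card : ℝ) > 0 := by exact_mod_cast hm
  have hLR : L.card = R.card := by rw [hL, hR]
  have h1 : (R.card : ℝ) * A ≤
      ∑ u ∈ L, ∑ v ∈ L, ∑ r ∈ R, (2:ℝ) ^ (q - 1) * (dist u r ^ q + dist v r ^ q) := by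
    rw [hA, Finset.mul_sum]
    apply Finset.sum_le_sum
    intro u _
    rw [Finset.mul_sum]
    apply Finset.sum_le_sum
    intro v _
    calc (R.card : ℝ) * dist u v ^ q = ∑ _r ∈ R, dist u v ^ q := by
          rw [Finset.sum_const, nsmul_eq_mul]
      _ ≤ _ := Finset.sum_le_sum fun r _ => key_aux hq u v r
  have e1 : ∑ u ∈ L, ∑ v ∈ L, ∑ r ∈ R, dist u r ^ q = (L.card : ℝ) * S := by
    rw [hS, Finset.mul_sum]
    apply Finset.sum_congr rfl
    intro u _
    rw [Finset.sum_const, nsmul_eq_mul]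
  have e2 : ∑ u ∈ L, ∑ v ∈ L, ∑ r ∈ R, dist v r ^ q = (L.card : ℝ) * S := by
    rw [hS, Finset.sum_const, nsmul_eq_mul]
  have h2 : (∑ u ∈ L, ∑ v ∈ L, ∑ r ∈ R, (2:ℝ) ^ (q - 1) * (dist u r ^ q + dist v r ^ q))
      = (2:ℝ) ^ (q - 1) * (2 * (R.card : ℝ) * S) := by
    simp only [← Finset.mul_sum]
    simp only [Finset.sum_add_distrib] at *
    rw [e1, e2, hLR]
    ring
  have h3 : (R.card : ℝ) * A ≤ (R.card : ℝ) * ((2:ℝ) ^ q * S) := by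
    have : (2:ℝ) ^ (q - 1) * (2 * (R.card : ℝ) * S) = (R.card : ℝ) * ((2:ℝ) ^ q * S) := by
      rw [show q = (q - 1) + 1 by ring, Real.rpow_add (by norm_num), Real.rpow_one]
      ring_nf
    rw [h2, this] at h1
    exact h1
  have h4 : A ≤ (2:ℝ) ^ q * S := le_of_mul_le_mul_left h3 hmR
  have hpow : (2:ℝ) ^ q = 2 * (2:ℝ) ^ (q - 1) := by
    rw [show q = (q - 1) + 1 by ring]
    rw [Real.rpow_add (by norm_num), Real.rpow_one]
    ring_nf
  calc (1 / 2 : ℝ) * A ≤ (1 / 2 : ℝ) * ((2:ℝ) ^ q * S) := by linarith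
    _ = (2:ℝ) ^ (q - 1) * S := by rw [hpow]; ring
end

section
/- Let q ≥ 1, let X be a finite metric space, k ≥ 2, and let OPT be a k-subset of X maximizing the remote-clique value cl_q. Let z₀ ∈ OPT be the center of a minimum-weight spanning star of OPT, i.e. Σ_{u∈OPT} d(z₀,u)^q = st_q(OPT). Let Δ := cl_q(OPT) / C(k,2). Then every point s ∈ X with d(z₀, s)^q > 2^q · Δ belongs to OPT. -/
lemma rpow_add_le_aux {q : ℝ} (hq : 1 ≤ q) {a b : ℝ} (ha : 0 ≤ a) (hb : 0 ≤ b) :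
    (a + b) ^ q ≤ 2 ^ (q - 1) * (a ^ q + b ^ q) := by
  lift a to NNReal using ha with a'
  lift b to NNReal using hb with b'
  have h := NNReal.rpow_add_le_mul_rpow_add_rpow a' b' hq
  have := NNReal.coe_le_coe.2 h
  push_cast [NNReal.coe_rpow] at this
  convert this using 2

theorem stmt_11 {X : Type*} [MetricSpace X] [Fintype X] (q : ℝ) (hq : 1 ≤ q)
    (k : ℕ) (hk2 : 2 ≤ k) (hkX : k ≤ Fintype.card X)
    (OPT : Finset X) (hOPT : OPT.card = k)
    (hmax : ∀ T : Finset X, T.card = k →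
      (1 / 2 : ℝ) * ∑ u ∈ T, ∑ v ∈ T, dist u v ^ q
        ≤ (1 / 2 : ℝ) * ∑ u ∈ OPT, ∑ v ∈ OPT, dist u v ^ q)
    (z₀ : X) (hz₀ : z₀ ∈ OPT)
    (hstar : ∀ z ∈ OPT, ∑ u ∈ OPT, dist z₀ u ^ q ≤ ∑ u ∈ OPT, dist z u ^ q)
    (Δ : ℝ)
    (hΔ : Δ = ((1 / 2 : ℝ) * ∑ u ∈ OPT, ∑ v ∈ OPT, dist u v ^ q) / (k * (k - 1) / 2))
    (s : X) (hs : (2:ℝ) ^ q * Δ < dist z₀ s ^ q) :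
    s ∈ OPT := by
  classical
  by_contra hsO
  set D : ℝ := ∑ u ∈ OPT, ∑ v ∈ OPT, dist u v ^ q with hD
  set E : Finset X := OPT.erase z₀ with hE
  have hqpos : (0:ℝ) < q := lt_of_lt_of_le one_pos hq
  have hzeroq : (0:ℝ) ^ q = 0 := Real.zero_rpow (ne_of_gt hqpos)
  have hsE : s ∉ E := fun h => hsO (Finset.mem_of_mem_erase h)
  have hzE : z₀ ∉ E := Finset.notMem_erase _ _
  have hins : insert z₀ E = OPT := Finset.insert_erase hz₀
  have hEcard : E.card = k - 1 := by rw [hE, Finset.card_erase_of_mem hz₀, hOPT]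
  -- card of T
  set T : Finset X := insert s E with hT
  have hTcard : T.card = k := by
    rw [hT, Finset.card_insert_of_notMem hsE, hEcard]
    omega
  -- star sum
  set st : ℝ := ∑ u ∈ OPT, dist z₀ u ^ q with hst
  have hstE : st = ∑ u ∈ E, dist z₀ u ^ q := by
    rw [hst, ← hins, Finset.sum_insert hzE, dist_self, hzeroq, zero_add]
  -- decompose D
  have hsplit : ∀ x : X, x ∉ E →
      ∑ u ∈ insert x E, ∑ v ∈ insert x E, dist u v ^ q
        = (∑ u ∈ E, ∑ v ∈ E, dist u v ^ q) + 2 * ∑ u ∈ E, dist x u ^ q := by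
    intro x hx
    rw [Finset.sum_insert hx, Finset.sum_insert hx, dist_self, hzeroq, zero_add]
    have : ∀ u ∈ E, ∑ v ∈ insert x E, dist u v ^ q
        = dist u x ^ q + ∑ v ∈ E, dist u v ^ q := fun u _ => Finset.sum_insert hx
    rw [Finset.sum_congr rfl this, Finset.sum_add_distrib]
    have : ∀ u ∈ E, dist u x ^ q = dist x u ^ q := fun u _ => by rw [dist_comm]
    rw [Finset.sum_congr rfl this]
    ring
  have hDdec : D = (∑ u ∈ E, ∑ v ∈ E, dist u v ^ q) + 2 * st := by
    rw [hD, ← hins, hsplit z₀ hzE, hstE]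
  have hTdec : ∑ u ∈ T, ∑ v ∈ T, dist u v ^ q
      = (∑ u ∈ E, ∑ v ∈ E, dist u v ^ q) + 2 * ∑ u ∈ E, dist s u ^ q := hsplit s hsE
  -- maximality gives: sum over E of d(s,u)^q ≤ st
  have hmaxT := hmax T hTcard
  rw [hTdec, hDdec] at hmaxT
  have hkey : ∑ u ∈ E, dist s u ^ q ≤ st := by nlinarith
  -- lower bound on each dist s u ^ q
  have hlow : ∀ u ∈ E, dist z₀ s ^ q ≤ 2 ^ (q-1) * (dist z₀ u ^ q + dist s u ^ q) := by
    intro u _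
    calc dist z₀ s ^ q ≤ (dist z₀ u + dist u s) ^ q := by
          apply Real.rpow_le_rpow dist_nonneg (dist_triangle _ _ _) (le_of_lt hqpos)
      _ = (dist z₀ u + dist s u) ^ q := by rw [dist_comm u s]
      _ ≤ 2 ^ (q-1) * (dist z₀ u ^ q + dist s u ^ q) :=
          rpow_add_le_aux hq dist_nonneg dist_nonneg
  have hsum : (E.card : ℝ) * dist z₀ s ^ q
      ≤ 2 ^ (q-1) * (st + ∑ u ∈ E, dist s u ^ q) := by
    calc (E.card : ℝ) * dist z₀ s ^ q = ∑ _u ∈ E, dist z₀ s ^ q := by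
          rw [Finset.sum_const, nsmul_eq_mul]
      _ ≤ ∑ u ∈ E, 2 ^ (q-1) * (dist z₀ u ^ q + dist s u ^ q) :=
          Finset.sum_le_sum hlow
      _ = 2 ^ (q-1) * (st + ∑ u ∈ E, dist s u ^ q) := by
          rw [← Finset.mul_sum, Finset.sum_add_distrib, hstE]
  -- st ≤ (k-1) Δ
  have hkst : (k : ℝ) * st ≤ D := by
    have : ∑ z ∈ OPT, st ≤ ∑ z ∈ OPT, ∑ u ∈ OPT, dist z u ^ q :=
      Finset.sum_le_sum fun z hz => hstar z hz
    rw [Finset.sum_const, nsmul_eq_mul, hOPT] at this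
    exact this
  have hk1 : (1:ℝ) ≤ (k:ℝ) - 1 := by
    have : (2:ℝ) ≤ (k:ℝ) := by exact_mod_cast hk2
    linarith
  have hkpos : (0:ℝ) < (k:ℝ) := by linarith
  have hk1pos : (0:ℝ) < (k:ℝ) - 1 := by linarith
  have hΔD : Δ = D / ((k:ℝ) * ((k:ℝ) - 1)) := by
    rw [hΔ]
    field_simp
  have hstΔ : st ≤ ((k:ℝ)-1) * Δ := by
    have hDk : ((k:ℝ)-1) * Δ = D / k := by
      rw [hΔD]
      field_simp
    rw [hDk, le_div_iff₀ hkpos, mul_comm]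
    exact hkst
  -- combine
  have hEc : (E.card : ℝ) = (k:ℝ) - 1 := by
    rw [hEcard]
    have : (1:ℕ) ≤ k := by omega
    push_cast [this]
    ring
  have h2q : (2:ℝ) ^ (q-1) * 2 = 2 ^ q := by
    rw [Real.rpow_sub (by norm_num : (0:ℝ) < 2), Real.rpow_one]
    ring
  have hpow_pos : (0:ℝ) < 2 ^ (q-1) := Real.rpow_pos_of_pos (by norm_num) _
  have hfinal : ((k:ℝ)-1) * dist z₀ s ^ q ≤ 2 ^ q * (((k:ℝ)-1) * Δ) := by
    calc ((k:ℝ)-1) * dist z₀ s ^ q ≤ 2 ^ (q-1) * (st + ∑ u ∈ E, dist s u ^ q) := by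
          rw [← hEc]; exact hsum
      _ ≤ 2 ^ (q-1) * (2 * st) := by nlinarith
      _ ≤ 2 ^ (q-1) * (2 * (((k:ℝ)-1) * Δ)) := by nlinarith
      _ = 2 ^ q * (((k:ℝ)-1) * Δ) := by rw [← h2q]; ring
  nlinarith
end

section
/- Let X be a finite metric space, k ≥ 2, q = 1, and let OPT be a k-subset maximizing the remote-clique value cl(T) = Σ over unordered pairs of d(u,v). Let z₀ be the center of the minimum-weight spanning star of OPT and Δ := cl(OPT)/C(k,2). Then the number of points of X lying outside the ball B(z₀, 2Δ) is strictly less than k/2. -/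
lemma sum_insert_pair {X : Type*} [MetricSpace X] [DecidableEq X]
    (E : Finset X) (w : X) (hw : w ∉ E) :
    ∑ u ∈ insert w E, ∑ v ∈ insert w E, dist u v
      = 2 * ∑ x ∈ E, dist w x + ∑ u ∈ E, ∑ v ∈ E, dist u v := by
  rw [Finset.sum_insert hw, Finset.sum_insert hw, dist_self,
    Finset.sum_congr rfl (fun u (hu : u ∈ E) => Finset.sum_insert hw),
    Finset.sum_add_distrib]
  have : ∑ u ∈ E, dist u w = ∑ u ∈ E, dist w u :=
    Finset.sum_congr rfl (fun u _ => dist_comm u w)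
  rw [this]; ring

theorem stmt_12 {X : Type*} [MetricSpace X] [Fintype X] [DecidableEq X]
    (k : ℕ) (hk2 : 2 ≤ k) (hkX : k ≤ Fintype.card X)
    (OPT : Finset X) (hOPT : OPT.card = k)
    (hmax : ∀ T : Finset X, T.card = k →
      (1 / 2 : ℝ) * ∑ u ∈ T, ∑ v ∈ T, dist u v
        ≤ (1 / 2 : ℝ) * ∑ u ∈ OPT, ∑ v ∈ OPT, dist u v)
    (z₀ : X) (hz₀ : z₀ ∈ OPT)
    (hstar : ∀ z ∈ OPT, ∑ u ∈ OPT, dist z₀ u ≤ ∑ u ∈ OPT, dist z u)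
    (Δ : ℝ)
    (hΔ : Δ = ((1 / 2 : ℝ) * ∑ u ∈ OPT, ∑ v ∈ OPT, dist u v) / (k * (k - 1) / 2)) :
    ((Finset.univ.filter (fun v : X => ¬ dist z₀ v ≤ 2 * Δ)).card : ℝ) < k / 2 := by
  have hkR : (2:ℝ) ≤ (k:ℝ) := by exact_mod_cast hk2
  have hkpos : (0:ℝ) < (k:ℝ) := by linarith
  have hk1pos : (0:ℝ) < (k:ℝ) - 1 := by linarith
  set A := ∑ u ∈ OPT, ∑ v ∈ OPT, dist u v with hA
  -- A > 0
  have hApos : 0 < A := by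
    obtain ⟨a, ha, b, hb, hab⟩ := Finset.one_lt_card.mp (by omega : 1 < OPT.card)
    have h1 : dist a b ≤ ∑ v ∈ OPT, dist a v :=
      Finset.single_le_sum (f := fun v => dist a v) (fun v _ => dist_nonneg) hb
    have h2 : ∑ v ∈ OPT, dist a v ≤ A :=
      Finset.single_le_sum (f := fun u => ∑ v ∈ OPT, dist u v)
        (fun u _ => Finset.sum_nonneg fun v _ => dist_nonneg) ha
    have := dist_pos.mpr hab
    linarith
  have hΔpos : 0 < Δ := by
    rw [hΔ]
    apply div_pos (by linarith) (by positivity)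
  -- A = Δ * k * (k-1)
  have hAeq : A = Δ * (k:ℝ) * ((k:ℝ) - 1) := by
    have hne : (k:ℝ) * ((k:ℝ) - 1) / 2 ≠ 0 := by positivity
    field_simp at hΔ
    linarith
  -- star bound: s ≤ Δ (k-1)
  set s := ∑ u ∈ OPT, dist z₀ u with hs
  have hstarb : s ≤ Δ * ((k:ℝ) - 1) := by
    have h := Finset.sum_le_sum (fun z hz => hstar z hz)
    rw [Finset.sum_const, hOPT] at h
    have : (k:ℝ) * s ≤ A := by
      have := h
      push_cast [nsmul_eq_mul] at this
      simpa using this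
    rw [hAeq] at this
    nlinarith
  set S := Finset.univ.filter (fun v : X => ¬ dist z₀ v ≤ 2 * Δ) with hSdef
  -- S ⊆ OPT
  have hSsub : S ⊆ OPT := by
    intro v hv
    have hvd : 2 * Δ < dist z₀ v := by
      simp only [hSdef, Finset.mem_filter] at hv
      linarith [not_le.mp hv.2]
    by_contra hvO
    set E := OPT.erase z₀ with hE
    have hz₀E : z₀ ∉ E := Finset.notMem_erase z₀ OPT
    have hvE : v ∉ E := fun h => hvO (Finset.mem_of_mem_erase h)
    have hEcard : E.card = k - 1 := by rw [hE, Finset.card_erase_of_mem hz₀, hOPT]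
    have hEcardR : (E.card : ℝ) = (k:ℝ) - 1 := by
      rw [hEcard]; push_cast [Nat.cast_sub (by omega : 1 ≤ k)]; ring
    have hOPTeq : OPT = insert z₀ E := (Finset.insert_erase hz₀).symm
    have hTcard : (insert v E).card = k := by
      rw [Finset.card_insert_of_notMem hvE, hEcard]; omega
    have hmaxT := hmax (insert v E) hTcard
    rw [hA, hOPTeq] at hmaxT
    rw [sum_insert_pair E v hvE, sum_insert_pair E z₀ hz₀E] at hmaxT
    -- so  Σ_E dist v x ≤ Σ_E dist z₀ x
    have hineq : ∑ x ∈ E, dist v x ≤ ∑ x ∈ E, dist z₀ x := by linarith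
    have hsE : ∑ x ∈ E, dist z₀ x = s := by
      rw [hs, hOPTeq, Finset.sum_insert hz₀E, dist_self]; ring
    -- triangle bound
    have htri : (E.card : ℝ) * dist z₀ v - ∑ x ∈ E, dist z₀ x ≤ ∑ x ∈ E, dist v x := by
      have h1 : ∑ x ∈ E, (dist z₀ v - dist z₀ x) ≤ ∑ x ∈ E, dist v x := by
        apply Finset.sum_le_sum
        intro x _
        have h3 := dist_triangle z₀ x v
        rw [dist_comm x v] at h3
        linarith
      rw [Finset.sum_sub_distrib, Finset.sum_const, nsmul_eq_mul] at h1
      linarith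
    rw [hsE] at htri hineq
    rw [hEcardR] at htri
    nlinarith
  -- counting
  have hsum1 : (2 * Δ) * (S.card : ℝ) ≤ ∑ v ∈ S, dist z₀ v := by
    have := Finset.card_nsmul_le_sum S (fun v => dist z₀ v) (2*Δ) ?_
    · rw [nsmul_eq_mul] at this; linarith [this]
    · intro v hv
      simp only [hSdef, Finset.mem_filter] at hv
      linarith [not_le.mp hv.2]
  have hsum2 : ∑ v ∈ S, dist z₀ v ≤ s := by
    exact Finset.sum_le_sum_of_subset_of_nonneg hSsub (fun v _ _ => dist_nonneg)
  have : (2 * Δ) * (S.card : ℝ) ≤ Δ * ((k:ℝ) - 1) := by linarith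
  nlinarith
end

section
/- Let M be a finite set of integers in [−t, t] with t ≥ 1, K ≥ 2 an integer, and for each m ∈ M set m' := m/(t·√K). Define X ⊆ S² ⊆ ℝ³ as the set of points ℓ_m := (−√(1 − m'²), m', 0) and r_m := (√(1 − m'²), 0, m') for m ∈ M. If S ⊆ M is a K-subset with Σ_{m∈S} m = 0, then the 2K-set T := {ℓ_m, r_m : m ∈ S} has centroid z_T = 0. -/
/-! With `c := t√K`, the maps `m ↦ ℓ_m` and `m ↦ r_m` are injective (a coordinate equals `m / c`)
and have disjoint images (`ℓ_m = r_n` forces `m = 0`, and then first coordinates `-1` and `≥ 0`),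
so the sum over `T` is `∑_{m ∈ S} (ℓ_m + r_m)`. The square roots cancel in
`ℓ_m + r_m = (m / c) • (0, 1, 1)`, leaving `(∑_{m ∈ S} m / c) • (0, 1, 1) = 0`. -/

open Real Finset

theorem Finset.sum_image_union_image {ι E : Type*} [DecidableEq E] [AddCommMonoid E]
    {f g : ι → E} {S : Finset ι} (hf : Set.InjOn f S) (hg : Set.InjOn g S)
    (hfg : ∀ i j, f i ≠ g j) :
    ∑ u ∈ S.image f ∪ S.image g, u = ∑ i ∈ S, (f i + g i) := by
  have hdisj : Disjoint (S.image f) (S.image g) := by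
    simp only [Finset.disjoint_left, Finset.mem_image, not_exists, not_and]
    rintro _ ⟨i, -, rfl⟩ j - hj
    exact hfg i j hj.symm
  rw [sum_union hdisj, sum_image hf, sum_image hg, sum_add_distrib]

noncomputable section

namespace SphereEmbedding

def left (x : ℝ) : EuclideanSpace ℝ (Fin 3) := !₂[-√(1 - x ^ 2), x, 0]

def right (x : ℝ) : EuclideanSpace ℝ (Fin 3) := !₂[√(1 - x ^ 2), 0, x]

theorem left_injective : Function.Injective left := fun x y h => by
  simpa [left] using congrArg (· 1) h

theorem right_injective : Function.Injective right := fun x y h => by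
  simpa [right] using congrArg (· 2) h

theorem left_ne_right (x y : ℝ) : left x ≠ right y := by
  intro h
  have hx : x = 0 := by simpa [left, right] using congrArg (· 1) h
  have h0 : -√(1 - x ^ 2) = √(1 - y ^ 2) := by simpa [left, right] using congrArg (· 0) h
  rw [hx] at h0
  norm_num at h0
  linarith [sqrt_nonneg (1 - y ^ 2)]

theorem left_add_right (x : ℝ) : left x + right x = x • !₂[0, 1, 1] := by
  ext i
  fin_cases i <;> simp [left, right]

end SphereEmbedding

end

open SphereEmbedding in
open scoped Classical in
theorem stmt_16_general (t K : ℕ) (ht : 1 ≤ t) (hK : 2 ≤ K)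
    (ℓf rf : ℤ → EuclideanSpace ℝ (Fin 3))
    (hℓf : ∀ m : ℤ, ℓf m = (WithLp.equiv 2 (Fin 3 → ℝ)).symm
      ![-Real.sqrt (1 - ((m : ℝ) / (t * Real.sqrt K)) ^ 2),
        (m : ℝ) / (t * Real.sqrt K), 0])
    (hrf : ∀ m : ℤ, rf m = (WithLp.equiv 2 (Fin 3 → ℝ)).symm
      ![Real.sqrt (1 - ((m : ℝ) / (t * Real.sqrt K)) ^ 2), 0,
        (m : ℝ) / (t * Real.sqrt K)])
    (S : Finset ℤ) (hsum : ∑ m ∈ S, m = 0) :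
    ((2 * K : ℝ))⁻¹ • ∑ u ∈ (S.image ℓf ∪ S.image rf), u = 0 := by
  set c : ℝ := t * √K
  have hc : c ≠ 0 := by positivity
  have hscale : Function.Injective fun m : ℤ => (m : ℝ) / c := fun a b h => by
    simpa [div_left_inj' hc] using h
  have hℓ : ℓf = left ∘ fun m : ℤ => (m : ℝ) / c := funext hℓf
  have hr : rf = right ∘ fun m : ℤ => (m : ℝ) / c := funext hrf
  have hsum' : ∑ m ∈ S, (m : ℝ) / c = 0 := by
    rw [← sum_div, ← Int.cast_sum, hsum, Int.cast_zero, zero_div]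
  subst hℓ hr
  rw [sum_image_union_image (left_injective.comp hscale).injOn
    (right_injective.comp hscale).injOn fun i j => left_ne_right _ _]
  simp only [Function.comp_apply, left_add_right, ← sum_smul, hsum', zero_smul, smul_zero]

open scoped Classical in
theorem stmt_16 (M : Finset ℤ) (t K : ℕ) (ht : 1 ≤ t) (hK : 2 ≤ K)
    (hrange : ∀ m ∈ M, |m| ≤ (t : ℤ))
    (ℓf rf : ℤ → EuclideanSpace ℝ (Fin 3))
    (hℓf : ∀ m : ℤ, ℓf m = (WithLp.equiv 2 (Fin 3 → ℝ)).symm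
      ![-Real.sqrt (1 - ((m : ℝ) / (t * Real.sqrt K)) ^ 2),
        (m : ℝ) / (t * Real.sqrt K), 0])
    (hrf : ∀ m : ℤ, rf m = (WithLp.equiv 2 (Fin 3 → ℝ)).symm
      ![Real.sqrt (1 - ((m : ℝ) / (t * Real.sqrt K)) ^ 2), 0,
        (m : ℝ) / (t * Real.sqrt K)])
    (S : Finset ℤ) (hS : S ⊆ M) (hScard : S.card = K) (hsum : ∑ m ∈ S, m = 0) :
    ((2 * K : ℝ))⁻¹ • ∑ u ∈ (S.image ℓf ∪ S.image rf), u = 0 :=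
  stmt_16_general t K ht hK ℓf rf hℓf hrf S hsum
end

section
/- Let q ≥ 1 and let T be a finite metric space with |T| = k ≥ 4 even. Let z ∈ T be the center of a minimum-weight spanning star, so st_q(T) = Σ_{u∈T} d(z,u)^q. Then for any balanced bipartition T = L ∪ R with |L| = |R| = k/2, one has Σ_{ℓ∈L, r∈R} (d(z,ℓ)^q + d(z,r)^q) = (k/2) · st_q(T) ≤ 2 · cl_q(T) ≤ 2(2^q + 1) · bp_q(T) ≤ 2^(q+2) · bp_q(T). -/
/-!
The identity is a regrouping of the double sum, and the bound by the clique uses only that `z`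
minimises the star weight. For the bound by the bisection, let `(A, B)` be an optimal balanced
bipartition. By the triangle inequality and convexity of `t ↦ t ^ q`,
`d(u, v) ^ q ≤ 2 ^ (q - 1) (d(u, r) ^ q + d(r, v) ^ q)`; averaging over `r ∈ B` bounds the weight
of the ordered pairs inside `A` by `2 ^ q` times the cut weight, and likewise inside `B`, so the weight
of all ordered pairs, `2 cl_q(T)`, is at most `(2 · 2 ^ q + 2)` times the cut weight.
-/

open Finset

lemma Finset.sum_sum_add {ι κ M : Type*} [AddCommMonoid M] (s : Finset ι) (t : Finset κ)
    (f : ι → M) (g : κ → M) :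
    ∑ i ∈ s, ∑ j ∈ t, (f i + g j) = #t • ∑ i ∈ s, f i + #s • ∑ j ∈ t, g j := by
  simp only [sum_add_distrib, sum_const, sum_nsmul]

lemma Real.add_rpow_le_two_rpow_sub_one_mul {q a b : ℝ} (hq : 1 ≤ q) (ha : 0 ≤ a) (hb : 0 ≤ b) :
    (a + b) ^ q ≤ 2 ^ (q - 1) * (a ^ q + b ^ q) := by
  lift a to NNReal using ha
  lift b to NNReal using hb
  exact_mod_cast NNReal.rpow_add_le_mul_rpow_add_rpow a b hq

lemma Real.two_mul_two_rpow_add_one_le {q : ℝ} (hq : 0 ≤ q) :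
    2 * ((2 : ℝ) ^ q + 1) ≤ 2 ^ (q + 2) := by
  have h1 : (1 : ℝ) ≤ 2 ^ q := Real.one_le_rpow one_le_two hq
  rw [Real.rpow_add two_pos, Real.rpow_two]
  linarith

section DistRpowSum

variable {X : Type*} [PseudoMetricSpace X]

lemma dist_rpow_le_two_rpow_sub_one_mul {q : ℝ} (hq : 1 ≤ q) (x y z : X) :
    dist x z ^ q ≤ 2 ^ (q - 1) * (dist x y ^ q + dist y z ^ q) :=
  (Real.rpow_le_rpow dist_nonneg (dist_triangle x y z) (by linarith)).trans
    (Real.add_rpow_le_two_rpow_sub_one_mul hq dist_nonneg dist_nonneg)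

noncomputable def distRpowSum (q : ℝ) (A B : Finset X) : ℝ :=
  ∑ a ∈ A, ∑ b ∈ B, dist a b ^ q

variable (q : ℝ) (A B : Finset X)

lemma distRpowSum_nonneg : 0 ≤ distRpowSum q A B :=
  sum_nonneg fun _ _ => sum_nonneg fun _ _ => Real.rpow_nonneg dist_nonneg q

lemma distRpowSum_comm : distRpowSum q A B = distRpowSum q B A := by
  rw [distRpowSum, sum_comm]
  simp only [dist_comm, distRpowSum]

variable {A B}

lemma distRpowSum_union_left {A' : Finset X} [DecidableEq X] (h : Disjoint A A') :
    distRpowSum q (A ∪ A') B = distRpowSum q A B + distRpowSum q A' B :=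
  sum_union h

lemma distRpowSum_union_right {B' : Finset X} [DecidableEq X] (h : Disjoint B B') :
    distRpowSum q A (B ∪ B') = distRpowSum q A B + distRpowSum q A B' := by
  simp only [distRpowSum, sum_union h, sum_add_distrib]

lemma card_mul_distRpowSum_self_le {q : ℝ} (hq : 1 ≤ q) :
    #B * distRpowSum q A A ≤ 2 ^ q * #A * distRpowSum q A B := by
  have hpair (u v : X) :
      #B * dist u v ^ q ≤ ∑ r ∈ B, 2 ^ (q - 1) * (dist u r ^ q + dist v r ^ q) := by
    rw [← nsmul_eq_mul, ← sum_const]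
    refine sum_le_sum fun r _ => ?_
    simpa only [dist_comm v r] using dist_rpow_le_two_rpow_sub_one_mul hq u r v
  calc #B * distRpowSum q A A
      ≤ 2 ^ (q - 1) * ∑ u ∈ A, ∑ v ∈ A, ∑ r ∈ B, (dist u r ^ q + dist v r ^ q) := by
        simp only [distRpowSum, mul_sum]
        exact sum_le_sum fun u _ => sum_le_sum fun v _ => hpair u v
    _ = 2 ^ (q - 1) * (2 * #A * distRpowSum q A B) := by
        simp only [sum_add_distrib, sum_const, nsmul_eq_mul, ← mul_sum, distRpowSum]
        ring
    _ = 2 ^ q * #A * distRpowSum q A B := by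
        rw [← mul_assoc, ← mul_assoc, ← Real.rpow_add_one two_ne_zero, sub_add_cancel]

lemma distRpowSum_self_le_of_card_eq {q : ℝ} (hq : 1 ≤ q) (hAB : #A = #B) :
    distRpowSum q A A ≤ 2 ^ q * distRpowSum q A B := by
  rcases B.eq_empty_or_nonempty with rfl | hB
  · simp_all [distRpowSum]
  have h := card_mul_distRpowSum_self_le (A := A) (B := B) hq
  rw [hAB, mul_comm (2 ^ q : ℝ), mul_assoc] at h
  exact le_of_mul_le_mul_left h (by exact_mod_cast hB.card_pos)

lemma distRpowSum_union_self_le [DecidableEq X] {q : ℝ} (hq : 1 ≤ q) (hdisj : Disjoint A B)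
    (hAB : #A = #B) :
    distRpowSum q (A ∪ B) (A ∪ B) ≤ 2 * (2 ^ q + 1) * distRpowSum q A B := by
  have hA := distRpowSum_self_le_of_card_eq hq hAB
  have hB := distRpowSum_self_le_of_card_eq hq hAB.symm
  rw [distRpowSum_comm q B A] at hB
  rw [distRpowSum_union_left q hdisj, distRpowSum_union_right q hdisj,
    distRpowSum_union_right q hdisj, distRpowSum_comm q B A]
  linarith

end DistRpowSum

theorem stmt_18_general {X : Type*} [MetricSpace X] [Fintype X] [DecidableEq X]
    (q : ℝ) (hq : 1 ≤ q) (k : ℕ) (hk : Fintype.card X = k)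
    (hkeven : Even k)
    (z : X) (hz : ∀ z' : X, ∑ u : X, dist z u ^ q ≤ ∑ u : X, dist z' u ^ q)
    (L R : Finset X) (hdisj : Disjoint L R) (hunion : L ∪ R = Finset.univ)
    (hL : L.card = k / 2) (hR : R.card = k / 2)
    (hne : ((Finset.univ : Finset X).powersetCard (k / 2)).Nonempty) :
    (∑ l ∈ L, ∑ r ∈ R, (dist z l ^ q + dist z r ^ q)
        = (k / 2 : ℝ) * ∑ u : X, dist z u ^ q) ∧
    ((k / 2 : ℝ) * ∑ u : X, dist z u ^ q
        ≤ 2 * ((1 / 2 : ℝ) * ∑ u : X, ∑ v : X, dist u v ^ q)) ∧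
    (2 * ((1 / 2 : ℝ) * ∑ u : X, ∑ v : X, dist u v ^ q)
        ≤ 2 * ((2:ℝ) ^ q + 1) *
          ((Finset.univ : Finset X).powersetCard (k / 2)).inf'
            hne (fun L' => ∑ l ∈ L', ∑ r ∈ Finset.univ \ L', dist l r ^ q)) ∧
    (2 * ((2:ℝ) ^ q + 1) *
          ((Finset.univ : Finset X).powersetCard (k / 2)).inf'
            hne (fun L' => ∑ l ∈ L', ∑ r ∈ Finset.univ \ L', dist l r ^ q)
        ≤ (2:ℝ) ^ (q + 2) *
          ((Finset.univ : Finset X).powersetCard (k / 2)).inf'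
            hne (fun L' => ∑ l ∈ L', ∑ r ∈ Finset.univ \ L', dist l r ^ q)) := by
  have hk2 : ((k / 2 : ℕ) : ℝ) = k / 2 := Nat.cast_div (even_iff_two_dvd.1 hkeven) two_ne_zero
  obtain ⟨A, hA, hbp⟩ := exists_mem_eq_inf' hne
    (fun L' => ∑ l ∈ L', ∑ r ∈ univ \ L', dist l r ^ q)
  have hAcard : #A = #(univ \ A) := by
    rw [card_univ_sdiff, hk, (mem_powersetCard.1 hA).2]
    obtain ⟨m, rfl⟩ := hkeven
    omega
  have hclique := distRpowSum_union_self_le hq disjoint_sdiff hAcard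
  rw [union_sdiff_of_subset (subset_univ A)] at hclique
  have hstar := card_nsmul_le_sum univ _ _ fun u _ => hz u
  rw [card_univ, hk, nsmul_eq_mul] at hstar
  have hstar_nonneg : 0 ≤ (k : ℝ) * ∑ u, dist z u ^ q :=
    mul_nonneg k.cast_nonneg (sum_nonneg fun u _ => Real.rpow_nonneg dist_nonneg q)
  rw [hbp]
  refine ⟨?_, ?_, ?_, ?_⟩
  · rw [sum_sum_add, hL, hR, ← smul_add, ← sum_union hdisj, hunion, nsmul_eq_mul, hk2]
  · linarith
  · simp only [distRpowSum] at hclique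
    linarith
  · exact mul_le_mul_of_nonneg_right (Real.two_mul_two_rpow_add_one_le (by linarith))
      (distRpowSum_nonneg q A (univ \ A))

theorem stmt_18 {X : Type*} [MetricSpace X] [Fintype X] [DecidableEq X]
    (q : ℝ) (hq : 1 ≤ q) (k : ℕ) (hk : Fintype.card X = k) (hk4 : 4 ≤ k)
    (hkeven : Even k)
    (z : X) (hz : ∀ z' : X, ∑ u : X, dist z u ^ q ≤ ∑ u : X, dist z' u ^ q)
    (L R : Finset X) (hdisj : Disjoint L R) (hunion : L ∪ R = Finset.univ)
    (hL : L.card = k / 2) (hR : R.card = k / 2)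
    (hne : ((Finset.univ : Finset X).powersetCard (k / 2)).Nonempty) :
    (∑ l ∈ L, ∑ r ∈ R, (dist z l ^ q + dist z r ^ q)
        = (k / 2 : ℝ) * ∑ u : X, dist z u ^ q) ∧
    ((k / 2 : ℝ) * ∑ u : X, dist z u ^ q
        ≤ 2 * ((1 / 2 : ℝ) * ∑ u : X, ∑ v : X, dist u v ^ q)) ∧
    (2 * ((1 / 2 : ℝ) * ∑ u : X, ∑ v : X, dist u v ^ q)
        ≤ 2 * ((2:ℝ) ^ q + 1) *
          ((Finset.univ : Finset X).powersetCard (k / 2)).inf'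
            hne (fun L' => ∑ l ∈ L', ∑ r ∈ Finset.univ \ L', dist l r ^ q)) ∧
    (2 * ((2:ℝ) ^ q + 1) *
          ((Finset.univ : Finset X).powersetCard (k / 2)).inf'
            hne (fun L' => ∑ l ∈ L', ∑ r ∈ Finset.univ \ L', dist l r ^ q)
        ≤ (2:ℝ) ^ (q + 2) *
          ((Finset.univ : Finset X).powersetCard (k / 2)).inf'
            hne (fun L' => ∑ l ∈ L', ∑ r ∈ Finset.univ \ L', dist l r ^ q)) :=
  stmt_18_general q hq k hk hkeven z hz L R hdisj hunion hL hR hne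
end
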